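/- Let P be an orthogonal projection and U a unitary on a Hilbert space F with dim F < ∞. If (z₁, z₂) with z₁z₂ ≠ 0 is a joint eigenvalue of ((P^⊥ + z₁z₂P)U, U*(P + z₁z₂P^⊥)), then (1/z̄₁, 1/z̄₂) is a joint eigenvalue of ((P^⊥ + (1/z̄₁z̄₂)P)U, U*(P + (1/z̄₁z̄₂)P^⊥)). -/

import Mathlib

/-!
With `Z = z₁z₂`, `A = (P^⊥ + ZP)U` and `B = U*(P + ZP^⊥)`, put `c = z̄₁z̄₂`,
`A' = (P^⊥ + c⁻¹P)U` and `B' = U*(P + c⁻¹P^⊥)`. In finite dimension `z̄₁` is an eigenvalue of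
`A* = U*(P^⊥ + cP)`; pick an eigenvector `w`. Since `A'A* = 1`, `w` is an eigenvector of `A'` for
`1/z̄₁`, and since `B'A' = c⁻¹`, it is an eigenvector of `B'` for `c⁻¹z̄₁ = 1/z̄₂`.
-/

open ContinuousLinearMap Module.End

namespace IsIdempotentElem

variable {R A : Type*} [CommRing R] [Ring A] [Algebra R A] {p : A}

lemma one_sub_add_smul_mul_one_sub_add_smul (hp : IsIdempotentElem p) (a b : R) :
    (1 - p + a • p) * (1 - p + b • p) = 1 - p + (a * b) • p := by
  simp only [add_mul, mul_add, smul_mul_assoc, mul_smul_comm, smul_smul, hp.eq,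
    hp.mul_one_sub_self, hp.one_sub_mul_self, hp.one_sub.eq, smul_zero, add_zero, zero_add]
  rw [mul_comm b]

lemma add_smul_one_sub_mul_one_sub_add_smul (hp : IsIdempotentElem p) (a : R) :
    (p + a • (1 - p)) * (1 - p + a • p) = a • 1 := by
  simp only [add_mul, mul_add, smul_mul_assoc, mul_smul_comm, hp.eq,
    hp.mul_one_sub_self, hp.one_sub_mul_self, hp.one_sub.eq, smul_zero, add_zero, zero_add]
  rw [← smul_add, sub_add_cancel]

end IsIdempotentElem

lemma IsSelfAdjoint.star_one_sub_add_smul {R A : Type*} [CommSemiring R] [StarRing R] [Ring A]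
    [StarRing A] [Algebra R A] [StarModule R A] {p : A} (hp : IsSelfAdjoint p) (a : R) :
    star (1 - p + a • p) = 1 - p + star a • p := by
  rw [star_add, star_sub, star_one, star_smul, hp.star_eq]

lemma ContinuousLinearMap.apply_eq_div_smul_of_mul_eq_smul_one {𝕜 E : Type*} [Field 𝕜]
    [AddCommGroup E] [Module 𝕜 E] [TopologicalSpace E] [ContinuousConstSMul 𝕜 E]
    {L T : E →L[𝕜] E} {c μ : 𝕜} {w : E} (hLT : L * T = c • 1) (hTw : T w = μ • w)
    (hμ : μ ≠ 0) : L w = (c / μ) • w := by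
  have : μ • L w = c • w := by
    rw [← map_smul, ← hTw, ← mul_apply_eq_comp, hLT, smul_apply, one_apply_eq_self]
  rw [div_eq_inv_mul, mul_smul, ← this, inv_smul_smul₀ hμ]

lemma ContinuousLinearMap.hasEigenvalue_adjoint {𝕜 E : Type*} [RCLike 𝕜]
    [NormedAddCommGroup E] [InnerProductSpace 𝕜 E] [CompleteSpace E] [FiniteDimensional 𝕜 E]
    {T : E →L[𝕜] E} {μ : 𝕜} (hμ : HasEigenvalue (T : Module.End 𝕜 E) μ) :
    HasEigenvalue (adjoint T : Module.End 𝕜 E) (starRingEnd 𝕜 μ) := by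
  rw [hasEigenvalue_iff_mem_spectrum, ← spectrum_eq, ← star_eq_adjoint, spectrum.map_star]
  rw [hasEigenvalue_iff_mem_spectrum, ← spectrum_eq] at hμ
  simpa only [Set.mem_star, RCLike.star_def, RCLike.conj_conj] using hμ

theorem joint_eigenvalue_symmetry {n : ℕ}
    (P U : EuclideanSpace ℂ (Fin n) →L[ℂ] EuclideanSpace ℂ (Fin n))
    (hP : IsSelfAdjoint P) (hP2 : P ∘L P = P)
    (hU1 : adjoint U ∘L U = 1) (hU2 : U ∘L adjoint U = 1)
    (z₁ z₂ : ℂ) (hz : z₁ * z₂ ≠ 0)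
    (v : EuclideanSpace ℂ (Fin n)) (hv : v ≠ 0)
    (h1 : (((1 - P) + (z₁ * z₂) • P) ∘L U) v = z₁ • v) :
    ∃ w : EuclideanSpace ℂ (Fin n), w ≠ 0 ∧
      (((1 - P) + ((starRingEnd ℂ z₁ * starRingEnd ℂ z₂)⁻¹) • P) ∘L U) w
        = (starRingEnd ℂ z₁)⁻¹ • w ∧
      (adjoint U ∘L (P + ((starRingEnd ℂ z₁ * starRingEnd ℂ z₂)⁻¹) • (1 - P))) w
        = (starRingEnd ℂ z₂)⁻¹ • w := by
  set c := starRingEnd ℂ z₁ * starRingEnd ℂ z₂ with hc_def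
  have hz₁ : starRingEnd ℂ z₁ ≠ 0 := by simpa using left_ne_zero_of_mul hz
  have hc : c ≠ 0 := by simpa [hc_def, ← map_mul] using hz
  have hP2 : IsIdempotentElem P := hP2
  have hU1 : adjoint U * U = 1 := hU1
  have hU2 : U * adjoint U = 1 := hU2
  obtain ⟨w, hw⟩ := (hasEigenvalue_adjoint
    (hasEigenvalue_of_hasEigenvector ⟨mem_eigenspace_iff.mpr h1, hv⟩)).exists_hasEigenvector
  have hA_adjoint : adjoint ((1 - P + (z₁ * z₂) • P) ∘L U) = adjoint U * (1 - P + c • P) := by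
    rw [adjoint_comp, ← star_eq_adjoint (1 - P + _), hP.star_one_sub_add_smul, Complex.star_def,
      map_mul]
    rfl
  have hA'A_adjoint : ((1 - P + c⁻¹ • P) * U) * (adjoint U * (1 - P + c • P)) = (1 : ℂ) • 1 := by
    rw [mul_assoc, ← mul_assoc U, hU2, one_mul, hP2.one_sub_add_smul_mul_one_sub_add_smul,
      inv_mul_cancel₀ hc, one_smul, sub_add_cancel, one_smul]
  have hB'A' : (adjoint U * (P + c⁻¹ • (1 - P))) * ((1 - P + c⁻¹ • P) * U) = c⁻¹ • 1 := by
    rw [mul_assoc, ← mul_assoc (P + _), hP2.add_smul_one_sub_mul_one_sub_add_smul,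
      smul_mul_assoc, one_mul, mul_smul_comm, hU1]
  have hA_adjoint_w : (adjoint U * (1 - P + c • P)) w = starRingEnd ℂ z₁ • w := by
    rw [← hA_adjoint]; exact hw.apply_eq_smul
  have hA'w := apply_eq_div_smul_of_mul_eq_smul_one hA'A_adjoint hA_adjoint_w hz₁
  rw [one_div] at hA'w
  have hB'w := apply_eq_div_smul_of_mul_eq_smul_one hB'A' hA'w (inv_ne_zero hz₁)
  refine ⟨w, hw.2, hA'w, hB'w.trans ?_⟩
  rw [hc_def]
  field_simp
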